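/- Let H be a complex Hilbert space, let (U_t)_{t∈ℝ} be a one-parameter unitary group on H (each U_t is unitary, U_0 = 1, U_{s+t} = U_s U_t for all s, t ∈ ℝ, and t ↦ U_t ξ is norm-continuous for every ξ ∈ H), and let T be a compact operator on H. If (ξ_n) is a sequence in H converging to 0 in the weak topology, then T U_t ξ_n converges to 0 in norm, uniformly for t in compact subsets of ℝ; that is, for every R > 0, sup_{t ∈ [−R,R]} ‖T(U_t ξ_n)‖ → 0 as n → ∞. -/
import Mathlib


open scoped InnerProductSpace

/-- If `(U_t)` is a strongly continuous one-parameter unitary group on a complex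
Hilbert space `H`, `T` is a compact operator on `H`, and `(ξ_n)` converges to `0`
weakly, then `T (U_t ξ_n) → 0` in norm, uniformly for `t` in compact subsets of `ℝ`. -/
theorem stmt1 {H : Type*} [NormedAddCommGroup H] [InnerProductSpace ℂ H] [CompleteSpace H]
    (U : ℝ → (H →L[ℂ] H))
    (hU_unitary : ∀ t, U t ∈ unitary (H →L[ℂ] H))
    (hU_zero : U 0 = 1)
    (hU_add : ∀ s t, U (s + t) = (U s).comp (U t))
    (hU_cont : ∀ ξ : H, Continuous fun t => U t ξ)
    (T : H →L[ℂ] H) (hT : IsCompactOperator T)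
    (ξ : ℕ → H)
    (hweak : ∀ η : H, Filter.Tendsto (fun n => ⟪ξ n, η⟫_ℂ) Filter.atTop (nhds 0)) :
    ∀ R > (0 : ℝ), ∀ ε > (0 : ℝ), ∃ N : ℕ, ∀ n ≥ N, ∀ t ∈ Set.Icc (-R) R,
      ‖T (U t (ξ n))‖ ≤ ε := by
  classical
  -- adjoint of U t is U (-t)
  have hadj : ∀ t : ℝ, ContinuousLinearMap.adjoint (U t) = U (-t) := by
    intro t
    have h1 : star (U t) * U t = 1 := (hU_unitary t).1
    have h2 : U t * U (-t) = 1 := by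
      rw [ContinuousLinearMap.mul_def, ← hU_add, add_neg_cancel, hU_zero]
    calc ContinuousLinearMap.adjoint (U t) = star (U t) :=
          (ContinuousLinearMap.star_eq_adjoint (U t)).symm
      _ = star (U t) * (U t * U (-t)) := by rw [h2, mul_one]
      _ = (star (U t) * U t) * U (-t) := by rw [mul_assoc]
      _ = U (-t) := by rw [h1, one_mul]
  -- uniform bound on ξ
  obtain ⟨M, hM0, hM⟩ : ∃ M : ℝ, 0 ≤ M ∧ ∀ n, ‖ξ n‖ ≤ M := by
    obtain ⟨C, hC⟩ := banach_steinhaus (g := fun n => innerSL ℂ (ξ n)) (fun x => by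
      obtain ⟨c, hc⟩ := ((hweak x).norm.bddAbove_range)
      exact ⟨c, fun i => hc (Set.mem_range_self i)⟩)
    refine ⟨max C 0, le_max_right _ _, fun n => ?_⟩
    calc ‖ξ n‖ = ‖innerSL ℂ (ξ n)‖ := (innerSL_apply_norm (𝕜 := ℂ) _).symm
      _ ≤ C := hC n
      _ ≤ max C 0 := le_max_left _ _
  -- compact set containing all T (U t (ξ n))
  set K : Set H := closure (T '' Metric.closedBall 0 M) with hK_def
  have hK : IsCompact K := hT.isCompact_closure_image_closedBall (𝕜₁ := ℂ) M
  have hmemK : ∀ (s : ℝ) (n : ℕ), T (U s (ξ n)) ∈ K := by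
    intro s n
    apply subset_closure
    exact ⟨U s (ξ n), by
      simpa [Metric.mem_closedBall, dist_zero_right,
        ContinuousLinearMap.norm_map_of_mem_unitary (hU_unitary s)] using hM n, rfl⟩
  -- key inner product identity
  have key : ∀ (s : ℝ) (w ζ : H),
      ⟪T (U s w), ζ⟫_ℂ = ⟪w, U (-s) (ContinuousLinearMap.adjoint T ζ)⟫_ℂ := by
    intro s w ζ
    rw [← hadj, ContinuousLinearMap.adjoint_inner_right,
      ContinuousLinearMap.adjoint_inner_right]
  intro R hR ε hε
  by_contra hcon
  push_neg at hcon
  choose n hn t ht hlt using hcon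
  have hx : ∀ k, (t k, T (U (t k) (ξ (n k)))) ∈ (Set.Icc (-R) R) ×ˢ K :=
    fun k => ⟨ht k, hmemK _ _⟩
  obtain ⟨⟨t₀, y⟩, -, φ, hφ, hconv⟩ :=
    ((isCompact_Icc).prod hK).tendsto_subseq hx
  have ht0 : Filter.Tendsto (fun k => t (φ k)) Filter.atTop (nhds t₀) :=
    (continuous_fst.tendsto _).comp hconv
  have hy : Filter.Tendsto (fun k => T (U (t (φ k)) (ξ (n (φ k))))) Filter.atTop (nhds y) :=
    (continuous_snd.tendsto _).comp hconv
  have hεy : ε ≤ ‖y‖ :=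
    ge_of_tendsto hy.norm (Filter.Eventually.of_forall fun k => (hlt (φ k)).le)
  -- n ∘ φ tends to atTop
  have hnφ : Filter.Tendsto (fun k => n (φ k)) Filter.atTop Filter.atTop :=
    Filter.tendsto_atTop_mono (fun k => le_trans (hφ.id_le k) (hn (φ k)))
      Filter.tendsto_id
  -- show y = 0 via weak convergence
  set ζ : H := ContinuousLinearMap.adjoint T y with hζ_def
  set ζ₀ : H := U (-t₀) ζ with hζ₀_def
  have hg : Filter.Tendsto (fun k => U (-(t (φ k))) ζ) Filter.atTop (nhds ζ₀) :=
    ((hU_cont ζ).tendsto _).comp ht0.neg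
  have h2 : Filter.Tendsto (fun k => ⟪ξ (n (φ k)), ζ₀⟫_ℂ) Filter.atTop (nhds 0) :=
    (hweak ζ₀).comp hnφ
  have h1 : Filter.Tendsto (fun k => ⟪ξ (n (φ k)), U (-(t (φ k))) ζ - ζ₀⟫_ℂ)
      Filter.atTop (nhds 0) := by
    have hb : ∀ k, ‖⟪ξ (n (φ k)), U (-(t (φ k))) ζ - ζ₀⟫_ℂ‖
        ≤ M * ‖U (-(t (φ k))) ζ - ζ₀‖ := by
      intro k
      calc ‖⟪ξ (n (φ k)), U (-(t (φ k))) ζ - ζ₀⟫_ℂ‖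
          ≤ ‖ξ (n (φ k))‖ * ‖U (-(t (φ k))) ζ - ζ₀‖ := norm_inner_le_norm _ _
        _ ≤ M * ‖U (-(t (φ k))) ζ - ζ₀‖ :=
            mul_le_mul_of_nonneg_right (hM _) (norm_nonneg _)
    have hlim : Filter.Tendsto (fun k => M * ‖U (-(t (φ k))) ζ - ζ₀‖)
        Filter.atTop (nhds 0) := by
      have h3 : Filter.Tendsto (fun k => U (-(t (φ k))) ζ - ζ₀) Filter.atTop (nhds 0) := by
        simpa using hg.sub (tendsto_const_nhds (x := ζ₀))
      simpa using h3.norm.const_mul M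
    exact squeeze_zero_norm hb hlim
  have hf : Filter.Tendsto (fun k => ⟪ξ (n (φ k)), U (-(t (φ k))) ζ⟫_ℂ)
      Filter.atTop (nhds 0) := by
    have := h1.add h2
    simp only [add_zero] at this
    convert this using 2 with k
    rw [← inner_add_right, sub_add_cancel]
  have hf' : Filter.Tendsto (fun k => ⟪T (U (t (φ k)) (ξ (n (φ k)))), y⟫_ℂ)
      Filter.atTop (nhds 0) := by
    convert hf using 2 with k
    exact key _ _ _
  have hf'' : Filter.Tendsto (fun k => ⟪T (U (t (φ k)) (ξ (n (φ k)))), y⟫_ℂ)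
      Filter.atTop (nhds ⟪y, y⟫_ℂ) :=
    hy.inner tendsto_const_nhds
  have hyy : ⟪y, y⟫_ℂ = 0 := tendsto_nhds_unique hf'' hf'
  have : y = 0 := inner_self_eq_zero.mp hyy
  rw [this, norm_zero] at hεy
  exact absurd hεy (not_le.mpr hε)
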